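/- The cutoff-decreasing algorithm does not always find a strongly stable matching when one exists: in the instance with A = {a1,a2}, P = {p1,p2} of capacity 1, supervisor s with budget 1 supervising both projects, preferences a1: p2,p1; a2: p2; p1: a2,a1; p2: a2,a1, and processing order (p1,p2), the matching {(a2,p2)} is strongly stable, but the algorithm outputs {(a1,p1)}, which is not strongly stable. -/

import Mathlib

open Finset

/-- An instance of the two-sided matching problem: applicants `A` with strict preference
lists over acceptable projects, projects `P` with strict preference lists over
acceptable applicants (best first), and capacities. -/
structure MatchInst (A P : Type) where
  prefA : A → List P
  prefP : P → List A
  cap : P → ℕ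

variable {A P : Type} [Fintype A] [Fintype P] [DecidableEq A] [DecidableEq P]

/-- number of applicants matched to project `p` -/
def mcount (M : A → Option P) (p : P) : ℕ := (univ.filter fun a => M a = some p).card

/-- counts after adding one extra applicant to project `p` (the matching `M ∪ {(a,p)}`) -/
def addCount (M : A → Option P) (p : P) : P → ℕ :=
  fun q => mcount M q + if q = p then 1 else 0

/-- the matching `(M ∪ {(a,p)}) \ {(a, M(a))}` -/
def swap (M : A → Option P) (a : A) (p : P) : A → Option P := Function.update M a (some p)

/-- a feasibility function on (anonymous) distributions of applicants over projects,
satisfying the heredity property -/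
def Heredity (f : (P → ℕ) → Prop) : Prop :=
  f (fun _ => 0) ∧ ∀ v w : P → ℕ, (∀ p, w p ≤ v p) → f v → f w

namespace MatchInst

variable (I : MatchInst A P)

def accA (a : A) (p : P) : Prop := p ∈ I.prefA a
def accP (p : P) (a : A) : Prop := a ∈ I.prefP p
/-- rank of project `p` in applicant `a`'s list (0-indexed; lower is better) -/
def rkA (a : A) (p : P) : ℕ := (I.prefA a).idxOf p
/-- rank of applicant `a` in project `p`'s list (0-indexed; lower is better) -/
def rkP (p : P) (a : A) : ℕ := (I.prefP p).idxOf a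
/-- score of applicant `a` at project `p`: `|A| - k + 1` if `a` is ranked `k`-th, `0` if unranked -/
def score (p : P) (a : A) : ℕ :=
  if a ∈ I.prefP p then Fintype.card A - (I.prefP p).idxOf a else 0

def IsMatching (M : A → Option P) : Prop :=
  (∀ a p, M a = some p → I.accA a p ∧ I.accP p a) ∧ ∀ p, mcount M p ≤ I.cap p

/-- `a` strictly prefers project `p` to the assignment `o` (being unmatched is worst) -/
def Prefers (a : A) (p : P) (o : Option P) : Prop :=
  I.accA a p ∧ ∀ q, o = some q → I.rkA a p < I.rkA a q

/-- no justified envy -/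
def Fair (M : A → Option P) : Prop :=
  ∀ a p, M a ≠ some p → I.Prefers a p (M a) →
    ∀ a', M a' = some p → I.rkP p a' < I.rkP p a

/-- applicant `a` is admissible at project `p` under cutoffs `d` -/
def Adm (d : P → ℕ) (a : A) (p : P) : Prop :=
  I.accA a p ∧ I.accP p a ∧ d p ≤ I.score p a

/-- cutoffs `d` induce the matching `M`: every applicant is matched to her most
preferred project where she is admissible (and unmatched if there is none) -/
def Induces (d : P → ℕ) (M : A → Option P) : Prop :=
  ∀ a : A,
    (∀ p, M a = some p → I.Adm d a p ∧ ∀ q, I.Adm d a q → q ≠ p → I.rkA a p < I.rkA a q) ∧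
    (M a = none → ∀ p, ¬ I.Adm d a p)

def Blocking (M : A → Option P) (a : A) (p : P) : Prop :=
  I.Prefers a p (M a) ∧
    ((mcount M p < I.cap p ∧ I.accP p a) ∨ ∃ a', M a' = some p ∧ I.rkP p a < I.rkP p a')

def StronglyStable (f : (P → ℕ) → Prop) (M : A → Option P) : Prop :=
  I.IsMatching M ∧ f (mcount M) ∧
    ∀ a p, I.Blocking M a p →
      (∀ a', M a' = some p → I.rkP p a' < I.rkP p a) ∧ ¬ f (mcount (swap M a p))

/-- weak stability in terms of permitted blocking pairs -/
def WeaklyStableBlk (f : (P → ℕ) → Prop) (M : A → Option P) : Prop :=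
  I.IsMatching M ∧ f (mcount M) ∧
    ∀ a p, I.Blocking M a p →
      (∀ a', M a' = some p → I.rkP p a' < I.rkP p a) ∧ ¬ f (addCount M p)

def WeaklyNonWasteful (f : (P → ℕ) → Prop) (M : A → Option P) : Prop :=
  f (mcount M) ∧ ∀ a p, M a ≠ some p → I.accP p a → I.Prefers a p (M a) →
    ¬ f (addCount M p) ∨ I.cap p ≤ mcount M p

/-- weak stability as fairness plus weak non-wastefulness -/
def WeaklyStable (f : (P → ℕ) → Prop) (M : A → Option P) : Prop :=
  I.IsMatching M ∧ I.Fair M ∧ I.WeaklyNonWasteful f M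

def CutoffNonWasteful (f : (P → ℕ) → Prop) (M : A → Option P) : Prop :=
  f (mcount M) ∧ ∀ a p, M a ≠ some p → I.accP p a → I.Prefers a p (M a) →
    ¬ f (mcount (swap M a p)) ∨
    (∃ a', M a' ≠ some p ∧ I.accP p a' ∧ I.rkP p a' < I.rkP p a ∧
      I.Prefers a' p (M a') ∧ ¬ f (mcount (swap M a' p))) ∨
    I.cap p ≤ mcount M p

def CutoffStable (f : (P → ℕ) → Prop) (M : A → Option P) : Prop :=
  I.IsMatching M ∧ I.Fair M ∧ I.CutoffNonWasteful f M

/-- project `p` is unconstrained for `M`: one more applicant can be added to `p` feasibly -/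
def Unconstrained (f : (P → ℕ) → Prop) (M : A → Option P) (p : P) : Prop :=
  f (addCount M p)

/-- cutoffs after decreasing the cutoff of `p` by one -/
def decCut (d : P → ℕ) (p : P) : P → ℕ := Function.update d p (d p - 1)

/-- minimal cutoffs: no cutoff can be decreased keeping the induced matching feasible -/
def MinimalCutoffs (f : (P → ℕ) → Prop) (d : P → ℕ) : Prop :=
  ∀ p, d p = 0 ∨ ∀ M', I.Induces (decCut d p) M' → ¬ f (mcount M')

def StrictlyBetter (a : A) (o o' : Option P) : Prop :=
  ∃ p, o = some p ∧ I.accA a p ∧ ∀ q, o' = some q → I.rkA a p < I.rkA a q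

def ParetoDominates (M' M : A → Option P) : Prop :=
  (∀ a, M' a = M a ∨ I.StrictlyBetter a (M' a) (M a)) ∧
    ∃ a, I.StrictlyBetter a (M' a) (M a)

end MatchInst

section Algorithm

instance (I : MatchInst A P) (d : P → ℕ) (a : A) (p : P) : Decidable (I.Adm d a p) :=
  decidable_of_iff (p ∈ I.prefA a ∧ a ∈ I.prefP p ∧ d p ≤ I.score p a) Iff.rfl

variable [LinearOrder P]

/-- the matching induced by cutoffs `d`: each applicant goes to her most preferred
project where she is admissible -/
def MatchInst.inducedM (I : MatchInst A P) (d : P → ℕ) (a : A) : Option P :=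
  ((univ.filter fun p => I.Adm d a p).sort (· ≤ ·)).argmin fun p => I.rkA a p

/-- the cutoff of `p` can be decreased by one keeping the induced matching feasible -/
def MatchInst.DecStep (I : MatchInst A P) (f : (P → ℕ) → Prop) (d : P → ℕ) (p : P) : Prop :=
  1 ≤ d p ∧ f (mcount (I.inducedM (MatchInst.decCut d p)))

/-- one step of the cutoff-decreasing algorithm: decrement the cutoff of the first
project (w.r.t. the processing order `ord`) whose decrement keeps feasibility -/
def MatchInst.AlgStep (I : MatchInst A P) (f : (P → ℕ) → Prop) (ord : P → P → Prop)
    (d d' : P → ℕ) : Prop :=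
  ∃ p, I.DecStep f d p ∧ (∀ q, ord q p → ¬ I.DecStep f d q) ∧ d' = MatchInst.decCut d p

/-- the cutoff-decreasing algorithm outputs `M`: starting from cutoffs `|A|+1`
everywhere, a sequence of steps reaches minimal cutoffs inducing `M` -/
def MatchInst.Outputs (I : MatchInst A P) (f : (P → ℕ) → Prop) (ord : P → P → Prop)
    (M : A → Option P) : Prop :=
  ∃ d : P → ℕ, Relation.ReflTransGen (I.AlgStep f ord) (fun _ => Fintype.card A + 1) d ∧
    (∀ p, ¬ I.DecStep f d p) ∧ M = I.inducedM d

end Algorithm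

/-- the instance: `a1: p2,p1`; `a2: p2`; `p1: a2,a1`; `p2: a2,a1`; capacities 1 -/
def I16 : MatchInst (Fin 2) (Fin 2) :=
  ⟨![[1, 0], [1]], ![[1, 0], [1, 0]], fun _ => 1⟩

/-- feasibility: total size at most 1 (one supervisor of budget 1 for both projects) -/
def f16 : (Fin 2 → ℕ) → Prop := fun v => v 0 + v 1 ≤ 1

/-!
Indices are shifted: applicant and project `i + 1` of the paper are `i : Fin 2` here.

Until the cutoff of `p2` drops, `a2` is never admissible, so the algorithm lowers the cutoff
of `p1` from `3` to `0`, inducing `∅, ∅, {(a1,p1)}, {(a1,p1)}`. Lowering the cutoff of `p2`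
to `2` would then admit `a2` to `p2` while `a1` stays at `p1`, exceeding the supervisor's
budget, so the algorithm stops at `{(a1,p1)}`. There `(a1,p2)` blocks, and moving `a1` to the
empty project `p2` is feasible. In `{(a2,p2)}` the only blocking pair is `(a1,p1)`, and adding
it exceeds the budget.
-/

namespace MatchInst

variable {I : MatchInst A P} {f : (P → ℕ) → Prop} {M : A → Option P}

omit [Fintype P] in
theorem not_stronglyStable_of_blocking {a : A} {p : P} (hb : I.Blocking M a p)
    (hf : f (mcount (swap M a p))) : ¬ I.StronglyStable f M :=
  fun h => (h.2.2 a p hb).2 hf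

section LinearOrder

variable [LinearOrder P]

theorem inducedM_eq_of_adm_iff {d : P → ℕ} (h : ∀ a q, I.Adm d a q ↔ M a = some q) :
    I.inducedM d = M := by
  funext a
  rcases hM : M a with _ | p
  · have : univ.filter (fun q => I.Adm d a q) = ∅ := by
      ext q; simp [h, hM]
    rw [inducedM, this, sort_empty, List.argmin_nil]
  · have : univ.filter (fun q => I.Adm d a q) = {p} := by
      ext q; simp [h, hM, eq_comm]
    rw [inducedM, this, sort_singleton, List.argmin_singleton]

theorem algStep_decCut_bot [OrderBot P] {d : P → ℕ} (h : I.DecStep f d ⊥) :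
    I.AlgStep f (· < ·) d (decCut d ⊥) :=
  ⟨⊥, h, fun _ hq => (not_lt_bot hq).elim, rfl⟩

end LinearOrder

end MatchInst

open MatchInst

def cutoffs16 (k : ℕ) : Fin 2 → ℕ := ![k, 3]

theorem decCut_cutoffs16_succ (k : ℕ) : decCut (cutoffs16 (k + 1)) 0 = cutoffs16 k := by
  funext p; fin_cases p <;> simp [decCut, cutoffs16]

theorem inducedM_cutoffs16_two : I16.inducedM (cutoffs16 2) = ![none, none] :=
  inducedM_eq_of_adm_iff (by decide)

theorem inducedM_cutoffs16_of_le_one {k : ℕ} (hk : k ≤ 1) :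
    I16.inducedM (cutoffs16 k) = ![some 0, none] := by
  interval_cases k <;> exact inducedM_eq_of_adm_iff (by decide)

theorem inducedM_decCut_cutoffs16_zero :
    I16.inducedM (decCut (cutoffs16 0) 1) = ![some 0, some 1] :=
  inducedM_eq_of_adm_iff (by decide)

theorem decStep_cutoffs16_succ {k : ℕ} (hk : k ≤ 2) :
    I16.DecStep f16 (cutoffs16 (k + 1)) 0 := by
  refine ⟨by simp [cutoffs16], ?_⟩
  rw [decCut_cutoffs16_succ]
  obtain rfl | hk := hk.eq_or_lt
  · rw [inducedM_cutoffs16_two]; unfold f16 mcount; decide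
  · rw [inducedM_cutoffs16_of_le_one (by omega)]; unfold f16 mcount; decide

theorem not_decStep_cutoffs16_zero : ∀ p, ¬ I16.DecStep f16 (cutoffs16 0) p := by
  refine Fin.forall_fin_two.2 ⟨fun ⟨h0, _⟩ => ?_, fun ⟨_, hf⟩ => ?_⟩
  · simp [cutoffs16] at h0
  · rw [inducedM_decCut_cutoffs16_zero] at hf
    revert hf; unfold f16 mcount; decide

theorem I16_outputs : I16.Outputs f16 (· < ·) ![some 0, none] := by
  refine ⟨cutoffs16 0, ?_, not_decStep_cutoffs16_zero,
    (inducedM_cutoffs16_of_le_one zero_le_one).symm⟩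
  have step : ∀ k ≤ 2, I16.AlgStep f16 (· < ·) (cutoffs16 (k + 1)) (cutoffs16 k) :=
    fun k hk => decCut_cutoffs16_succ k ▸ algStep_decCut_bot (decStep_cutoffs16_succ hk)
  have start : (fun _ => Fintype.card (Fin 2) + 1) = cutoffs16 3 := by decide
  rw [start]
  exact .head (step 2 le_rfl) (.head (step 1 one_le_two) (.single (step 0 zero_le_two)))

/-- the matching `{(a2,p2)}` is strongly stable, yet the cutoff-decreasing
algorithm (processing order `(p1,p2)`) outputs `{(a1,p1)}`, which is not strongly stable. -/
theorem algorithm_misses_stronglyStable :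
    I16.StronglyStable f16 ![none, some 1] ∧
    I16.Outputs f16 (· < ·) ![some 0, none] ∧
    ¬ I16.StronglyStable f16 ![some 0, none] := by
  refine ⟨?_, I16_outputs, ?_⟩
  · unfold StronglyStable IsMatching Blocking Prefers accA accP rkA rkP mcount swap f16 I16
    decide
  · refine not_stronglyStable_of_blocking (a := 0) (p := 1) ?_ ?_
    · unfold Blocking Prefers accA accP rkA rkP mcount I16
      decide
    · unfold f16 mcount swap
      decide
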